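/- Let C be the extended CMV matrix of α : ℤ → ℂ with |α_n| < 1 for all n, and write C^{−ℓ} = (C*)^ℓ (C is unitary). Then for all ℓ ≥ 1 and all m ∈ ℤ: (C^ℓ)_{m,m+k} = (C^{−ℓ})_{m,m+k} = 0 for every k > 2ℓ; (C^ℓ)_{2m,2m+2ℓ} = ρ_{2m} ρ_{2m+1} ⋯ ρ_{2m+2ℓ−1}; (C^ℓ)_{2m+1,2m+2ℓ+1} = 0; (C^{−ℓ})_{2m,2m+2ℓ} = 0; (C^{−ℓ})_{2m+1,2m+2ℓ+1} = ρ_{2m+1} ρ_{2m+2} ⋯ ρ_{2m+2ℓ}; (C^ℓ)_{2m,2m+2ℓ−1} = ρ_{2m} ρ_{2m+1} ⋯ ρ_{2m+2ℓ−2} · conj(α_{2m+2ℓ−1}); (C^ℓ)_{2m+1,2m+2ℓ} = −α_{2m} ρ_{2m+1} ⋯ ρ_{2m+2ℓ−1}; (C^{−ℓ})_{2m,2m+2ℓ−1} = −conj(α_{2m−1}) ρ_{2m} ρ_{2m+1} ⋯ ρ_{2m+2ℓ−2}; (C^{−ℓ})_{2m+1,2m+2ℓ} = ρ_{2m+1}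 ⋯ ρ_{2m+2ℓ−1} · α_{2m+2ℓ}. -/

import Mathlib

open scoped ComplexConjugate

noncomputable section

/-- The two-sided Hilbert space `ℓ²(ℤ, ℂ)`. -/
abbrev HZ : Type := lp (fun _ : ℤ => ℂ) 2

/-- The standard basis vectors. -/
def deltaZ (k : ℤ) : HZ := lp.single 2 k 1

/-- Matrix entries `A_{kℓ} = ⟨δ_k, A δ_ℓ⟩`. -/
def entryZ (A : HZ →L[ℂ] HZ) (k l : ℤ) : ℂ := inner ℂ (deltaZ k) (A (deltaZ l))

/-- `ρ_n = (1 − |α_n|²)^{1/2}`. -/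
def rho (α : ℤ → ℂ) (n : ℤ) : ℝ := Real.sqrt (1 - ‖α n‖ ^ 2)

/-- `L` acts as the even-indexed CMV factor of the Verblunsky coefficients `α`. -/
def IsCMVL (α : ℤ → ℂ) (L : HZ →L[ℂ] HZ) : Prop :=
  ∀ (u : HZ) (m : ℤ),
    (L u) (2 * m) = conj (α (2 * m)) * u (2 * m) + (rho α (2 * m) : ℂ) * u (2 * m + 1) ∧
    (L u) (2 * m + 1) = (rho α (2 * m) : ℂ) * u (2 * m) - α (2 * m) * u (2 * m + 1)

/-- `M` acts as the odd-indexed CMV factor of the Verblunsky coefficients `α`. -/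
def IsCMVM (α : ℤ → ℂ) (M : HZ →L[ℂ] HZ) : Prop :=
  ∀ (u : HZ) (m : ℤ),
    (M u) (2 * m + 1) = conj (α (2 * m + 1)) * u (2 * m + 1)
        + (rho α (2 * m + 1) : ℂ) * u (2 * m + 2) ∧
    (M u) (2 * m + 2) = (rho α (2 * m + 1) : ℂ) * u (2 * m + 1)
        - α (2 * m + 1) * u (2 * m + 2)

/-! Since `L` and `M` act by `2 × 2` blocks, `(L M u)_r` only involves `u_{r-1}, …, u_{r+2}` for
even `r` and `u_{r-2}, …, u_{r+1}` for odd `r`. Taking `u = C^ℓ δ_c` turns this into a recursion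
expressing row `r` of `C^{ℓ+1}` through four neighbouring rows of `C^ℓ`. On the two outermost
diagonals of the band only one or two of these terms survive, so induction on `ℓ` produces the
products of the `ρ`'s. The entries of `(C^*)^ℓ` are conjugates of entries of `C^ℓ` below the
diagonal, which are handled by the same recursion. -/

def rhoProd (α : ℤ → ℂ) (a : ℤ) (n : ℕ) : ℂ := ∏ j ∈ Finset.range n, (rho α (a + j) : ℂ)

theorem rhoProd_succ (α : ℤ → ℂ) (a : ℤ) (n : ℕ) :
    rhoProd α a (n + 1) = rhoProd α a n * rho α (a + n) :=
  Finset.prod_range_succ _ _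

theorem rhoProd_succ' (α : ℤ → ℂ) (a : ℤ) (n : ℕ) :
    rhoProd α a (n + 1) = rho α a * rhoProd α (a + 1) n := by
  simp only [rhoProd, Finset.prod_range_succ', Nat.cast_succ, CharP.cast_eq_zero, add_zero]
  rw [mul_comm]
  congr 2 with j
  ring_nf

theorem rhoProd_add_two (α : ℤ → ℂ) (a : ℤ) (n : ℕ) :
    rhoProd α a (n + 2) = rho α a * rho α (a + 1) * rhoProd α (a + 2) n := by
  rw [rhoProd_succ', rhoProd_succ', mul_assoc, add_assoc, one_add_one_eq_two]

theorem conj_rhoProd (α : ℤ → ℂ) (a : ℤ) (n : ℕ) : conj (rhoProd α a n) = rhoProd α a n := by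
  simp [rhoProd, map_prod]

theorem entryZ_eq_apply (A : HZ →L[ℂ] HZ) (k l : ℤ) : entryZ A k l = A (deltaZ l) k := by
  simp [entryZ, deltaZ, lp.inner_single_left]

theorem entryZ_one (k l : ℤ) : entryZ 1 k l = if k = l then 1 else 0 := by
  simp [entryZ_eq_apply, deltaZ, lp.single_apply, Pi.single_apply]

theorem entryZ_adjoint (A : HZ →L[ℂ] HZ) (k l : ℤ) :
    entryZ (ContinuousLinearMap.adjoint A) k l = conj (entryZ A l k) := by
  rw [entryZ, ContinuousLinearMap.adjoint_inner_right, entryZ, inner_conj_symm]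

theorem ContinuousLinearMap.adjoint_pow {𝕜 E : Type*} [RCLike 𝕜] [NormedAddCommGroup E]
    [InnerProductSpace 𝕜 E] [CompleteSpace E] (A : E →L[𝕜] E) (n : ℕ) :
    ContinuousLinearMap.adjoint A ^ n = ContinuousLinearMap.adjoint (A ^ n) := by
  simp only [← ContinuousLinearMap.star_eq_adjoint, star_pow]

structure UpperBandEdge (α : ℤ → ℂ) (A : HZ →L[ℂ] HZ) (ℓ : ℕ) : Prop where
  vanish : ∀ r c, r + 2 * (ℓ : ℤ) < c → entryZ A r c = 0
  even_top : ∀ r c, Even r → c = r + 2 * (ℓ : ℤ) → entryZ A r c = rhoProd α r (2 * ℓ)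
  odd_top : ∀ r c, Odd r → c = r + 2 * (ℓ : ℤ) → entryZ A r c = 0
  even_next : ∀ r c, Even r → c = r + 2 * (ℓ : ℤ) - 1 →
    entryZ A r c = rhoProd α r (2 * ℓ - 1) * conj (α c)
  odd_next : ∀ r c, Odd r → c = r + 2 * (ℓ : ℤ) - 1 →
    entryZ A r c = -α (r - 1) * rhoProd α r (2 * ℓ - 1)

structure LowerBandEdge (α : ℤ → ℂ) (A : HZ →L[ℂ] HZ) (ℓ : ℕ) : Prop where
  vanish : ∀ r c, c + 2 * (ℓ : ℤ) < r → entryZ A r c = 0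
  even_bottom : ∀ r c, Even c → r = c + 2 * (ℓ : ℤ) → entryZ A r c = 0
  odd_bottom : ∀ r c, Odd c → r = c + 2 * (ℓ : ℤ) → entryZ A r c = rhoProd α c (2 * ℓ)
  even_next : ∀ r c, Even c → r = c + 2 * (ℓ : ℤ) - 1 →
    entryZ A r c = -α (c - 1) * rhoProd α c (2 * ℓ - 1)
  odd_next : ∀ r c, Odd c → r = c + 2 * (ℓ : ℤ) - 1 →
    entryZ A r c = conj (α r) * rhoProd α c (2 * ℓ - 1)

section CMV

variable {α : ℤ → ℂ} {L M : HZ →L[ℂ] HZ} (hL : IsCMVL α L) (hM : IsCMVM α M)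
include hL hM

theorem entryZ_cmv_mul_of_even (A : HZ →L[ℂ] HZ) {r : ℤ} (hr : Even r) (c : ℤ) :
    entryZ (L * M * A) r c =
      conj (α r) * (rho α (r - 1) * entryZ A (r - 1) c - α (r - 1) * entryZ A r c)
        + rho α r * (conj (α (r + 1)) * entryZ A (r + 1) c
          + rho α (r + 1) * entryZ A (r + 2) c) := by
  obtain ⟨s, rfl⟩ := even_iff_two_dvd.mp hr
  have hM' := (hM (A (deltaZ c)) (s - 1)).2
  rw [show 2 * (s - 1) + 2 = 2 * s by ring, show 2 * (s - 1) + 1 = 2 * s - 1 by ring] at hM'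
  simp only [entryZ_eq_apply, mul_apply_eq_comp]
  rw [(hL _ s).1, hM', (hM _ s).1]

theorem entryZ_cmv_mul_of_odd (A : HZ →L[ℂ] HZ) {r : ℤ} (hr : Odd r) (c : ℤ) :
    entryZ (L * M * A) r c =
      rho α (r - 1) * (rho α (r - 2) * entryZ A (r - 2) c - α (r - 2) * entryZ A (r - 1) c)
        - α (r - 1) * (conj (α r) * entryZ A r c + rho α r * entryZ A (r + 1) c) := by
  obtain ⟨s, rfl⟩ := hr
  have hM' := (hM (A (deltaZ c)) (s - 1)).2
  rw [show 2 * (s - 1) + 2 = 2 * s by ring, show 2 * (s - 1) + 1 = 2 * s + 1 - 2 by ring] at hM'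
  simp only [entryZ_eq_apply, mul_apply_eq_comp, add_sub_cancel_right]
  rw [(hL _ s).2, hM', (hM _ s).1, add_assoc, one_add_one_eq_two]

theorem upperBandEdge_cmv : UpperBandEdge α (L * M) 1 := by
  rw [← mul_one (L * M)]
  refine ⟨fun r c hrc => ?_, fun r c hr hc => ?_, fun r c hr hc => ?_, fun r c hr hc => ?_,
    fun r c hr hc => ?_⟩
  · rcases Int.even_or_odd r with hr | hr
    · rw [entryZ_cmv_mul_of_even hL hM 1 hr]
      simp (disch := omega) only [entryZ_one, if_neg]
      ring
    · rw [entryZ_cmv_mul_of_odd hL hM 1 hr]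
      simp (disch := omega) only [entryZ_one, if_neg]
      ring
  · obtain rfl : c = r + 2 := by omega
    rw [entryZ_cmv_mul_of_even hL hM 1 hr]
    simp (disch := omega) only [entryZ_one, if_neg]
    simp [rhoProd, Finset.prod_range_succ]
  · rw [entryZ_cmv_mul_of_odd hL hM 1 hr]
    simp (disch := omega) only [entryZ_one, if_neg]
    ring
  · obtain rfl : c = r + 1 := by omega
    rw [entryZ_cmv_mul_of_even hL hM 1 hr]
    simp (disch := omega) only [entryZ_one, if_neg]
    simp [rhoProd]
  · obtain rfl : c = r + 1 := by omega
    rw [entryZ_cmv_mul_of_odd hL hM 1 hr]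
    simp (disch := omega) only [entryZ_one, if_neg]
    simp [rhoProd]

theorem lowerBandEdge_cmv : LowerBandEdge α (L * M) 1 := by
  rw [← mul_one (L * M)]
  refine ⟨fun r c hrc => ?_, fun r c hc hr => ?_, fun r c hc hr => ?_, fun r c hc hr => ?_,
    fun r c hc hr => ?_⟩
  · rcases Int.even_or_odd r with hr | hr
    · rw [entryZ_cmv_mul_of_even hL hM 1 hr]
      simp (disch := omega) only [entryZ_one, if_neg]
      ring
    · rw [entryZ_cmv_mul_of_odd hL hM 1 hr]
      simp (disch := omega) only [entryZ_one, if_neg]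
      ring
  · rw [entryZ_cmv_mul_of_even hL hM 1 (by grind)]
    simp (disch := omega) only [entryZ_one, if_neg]
    ring
  · obtain rfl : c = r - 2 := by omega
    rw [entryZ_cmv_mul_of_odd hL hM 1 (by grind)]
    simp (disch := omega) only [entryZ_one, if_neg]
    simp [rhoProd, Finset.prod_range_succ]
    ring_nf
  · obtain rfl : c = r - 1 := by omega
    rw [entryZ_cmv_mul_of_odd hL hM 1 (by grind)]
    simp (disch := omega) only [entryZ_one, if_neg]
    simp [rhoProd]
    ring_nf
  · obtain rfl : c = r - 1 := by omega
    rw [entryZ_cmv_mul_of_even hL hM 1 (by grind)]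
    simp (disch := omega) only [entryZ_one, if_neg]
    simp [rhoProd]

theorem UpperBandEdge.cmv_mul {A : HZ →L[ℂ] HZ} {ℓ : ℕ}
    (h : UpperBandEdge α A ℓ) (hℓ : 1 ≤ ℓ) : UpperBandEdge α (L * M * A) (ℓ + 1) where
  vanish r c hrc := by
    rcases Int.even_or_odd r with hr | hr
    · rw [entryZ_cmv_mul_of_even hL hM A hr, h.vanish (r - 1) c (by omega),
        h.vanish r c (by omega), h.vanish (r + 1) c (by omega), h.vanish (r + 2) c (by omega)]
      ring
    · rw [entryZ_cmv_mul_of_odd hL hM A hr, h.vanish (r - 2) c (by omega),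
        h.vanish (r - 1) c (by omega), h.vanish r c (by omega), h.vanish (r + 1) c (by omega)]
      ring
  even_top r c hr hc := by
    rw [entryZ_cmv_mul_of_even hL hM A hr, h.vanish (r - 1) c (by omega),
      h.vanish r c (by omega), h.vanish (r + 1) c (by omega),
      h.even_top (r + 2) c (hr.add even_two) (by omega),
      show 2 * (ℓ + 1) = 2 * ℓ + 2 by ring, rhoProd_add_two]
    ring
  odd_top r c hr hc := by
    rw [entryZ_cmv_mul_of_odd hL hM A hr, h.vanish (r - 2) c (by omega),
      h.vanish (r - 1) c (by omega), h.vanish r c (by omega), h.vanish (r + 1) c (by omega)]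
    ring
  even_next r c hr hc := by
    rw [entryZ_cmv_mul_of_even hL hM A hr, h.vanish (r - 1) c (by omega),
      h.vanish r c (by omega), h.odd_top (r + 1) c hr.add_one (by omega),
      h.even_next (r + 2) c (hr.add even_two) (by omega),
      show 2 * (ℓ + 1) - 1 = 2 * ℓ - 1 + 2 by omega, rhoProd_add_two]
    ring
  odd_next r c hr hc := by
    rw [entryZ_cmv_mul_of_odd hL hM A hr, h.vanish (r - 2) c (by omega),
      h.vanish (r - 1) c (by omega), h.vanish r c (by omega),
      h.even_top (r + 1) c hr.add_one (by omega),
      show 2 * (ℓ + 1) - 1 = 2 * ℓ + 1 by omega, rhoProd_succ']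
    ring

theorem LowerBandEdge.cmv_mul {A : HZ →L[ℂ] HZ} {ℓ : ℕ}
    (h : LowerBandEdge α A ℓ) (hℓ : 1 ≤ ℓ) : LowerBandEdge α (L * M * A) (ℓ + 1) where
  vanish r c hrc := by
    rcases Int.even_or_odd r with hr | hr
    · rw [entryZ_cmv_mul_of_even hL hM A hr, h.vanish (r - 1) c (by omega),
        h.vanish r c (by omega), h.vanish (r + 1) c (by omega), h.vanish (r + 2) c (by omega)]
      ring
    · rw [entryZ_cmv_mul_of_odd hL hM A hr, h.vanish (r - 2) c (by omega),
        h.vanish (r - 1) c (by omega), h.vanish r c (by omega), h.vanish (r + 1) c (by omega)]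
      ring
  even_bottom r c hc hr := by
    rw [entryZ_cmv_mul_of_even hL hM A (by grind), h.vanish (r - 1) c (by omega),
      h.vanish r c (by omega), h.vanish (r + 1) c (by omega), h.vanish (r + 2) c (by omega)]
    ring
  odd_bottom r c hc hr := by
    rw [entryZ_cmv_mul_of_odd hL hM A (by grind), h.odd_bottom (r - 2) c hc (by omega),
      h.vanish (r - 1) c (by omega), h.vanish r c (by omega), h.vanish (r + 1) c (by omega),
      show 2 * (ℓ + 1) = 2 * ℓ + 1 + 1 by ring, rhoProd_succ, rhoProd_succ,
      show c + ((2 * ℓ : ℕ) : ℤ) = r - 2 by push_cast; omega,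
      show c + ((2 * ℓ + 1 : ℕ) : ℤ) = r - 1 by push_cast; omega]
    ring
  even_next r c hc hr := by
    rw [entryZ_cmv_mul_of_odd hL hM A (by grind), h.even_next (r - 2) c hc (by omega),
      h.even_bottom (r - 1) c hc (by omega), h.vanish r c (by omega),
      h.vanish (r + 1) c (by omega),
      show 2 * (ℓ + 1) - 1 = 2 * ℓ - 1 + 1 + 1 by omega, rhoProd_succ, rhoProd_succ,
      show c + ((2 * ℓ - 1 : ℕ) : ℤ) = r - 2 by omega,
      show c + ((2 * ℓ - 1 + 1 : ℕ) : ℤ) = r - 1 by omega]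
    ring
  odd_next r c hc hr := by
    rw [entryZ_cmv_mul_of_even hL hM A (by grind), h.odd_bottom (r - 1) c hc (by omega),
      h.vanish r c (by omega), h.vanish (r + 1) c (by omega), h.vanish (r + 2) c (by omega),
      show 2 * (ℓ + 1) - 1 = 2 * ℓ + 1 by omega, rhoProd_succ,
      show c + ((2 * ℓ : ℕ) : ℤ) = r - 1 by push_cast; omega]
    ring

theorem upperBandEdge_cmv_pow {ℓ : ℕ} (hℓ : 1 ≤ ℓ) :
    UpperBandEdge α ((L * M) ^ ℓ) ℓ := by
  induction ℓ, hℓ using Nat.le_induction with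
  | base => simpa using upperBandEdge_cmv hL hM
  | succ n hn ih => rw [pow_succ']; exact ih.cmv_mul hL hM hn

theorem lowerBandEdge_cmv_pow {ℓ : ℕ} (hℓ : 1 ≤ ℓ) :
    LowerBandEdge α ((L * M) ^ ℓ) ℓ := by
  induction ℓ, hℓ using Nat.le_induction with
  | base => simpa using lowerBandEdge_cmv hL hM
  | succ n hn ih => rw [pow_succ']; exact ih.cmv_mul hL hM hn

end CMV

theorem statement9_general (α : ℤ → ℂ)
    (L M : HZ →L[ℂ] HZ) (hL : IsCMVL α L) (hM : IsCMVM α M)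
    (ℓ : ℕ) (hℓ : 1 ≤ ℓ) (m : ℤ) :
    (∀ k : ℤ, 2 * (ℓ : ℤ) < k →
      entryZ ((L * M) ^ ℓ) m (m + k) = 0 ∧
      entryZ ((ContinuousLinearMap.adjoint (L * M)) ^ ℓ) m (m + k) = 0) ∧
    entryZ ((L * M) ^ ℓ) (2 * m) (2 * m + 2 * ℓ)
      = ∏ j ∈ Finset.range (2 * ℓ), (rho α (2 * m + j) : ℂ) ∧
    entryZ ((L * M) ^ ℓ) (2 * m + 1) (2 * m + 2 * ℓ + 1) = 0 ∧
    entryZ ((ContinuousLinearMap.adjoint (L * M)) ^ ℓ) (2 * m) (2 * m + 2 * ℓ) = 0 ∧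
    entryZ ((ContinuousLinearMap.adjoint (L * M)) ^ ℓ) (2 * m + 1) (2 * m + 2 * ℓ + 1)
      = ∏ j ∈ Finset.range (2 * ℓ), (rho α (2 * m + 1 + j) : ℂ) ∧
    entryZ ((L * M) ^ ℓ) (2 * m) (2 * m + 2 * ℓ - 1)
      = (∏ j ∈ Finset.range (2 * ℓ - 1), (rho α (2 * m + j) : ℂ)) *
          conj (α (2 * m + 2 * ℓ - 1)) ∧
    entryZ ((L * M) ^ ℓ) (2 * m + 1) (2 * m + 2 * ℓ)
      = -α (2 * m) * ∏ j ∈ Finset.range (2 * ℓ - 1), (rho α (2 * m + 1 + j) : ℂ) ∧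
    entryZ ((ContinuousLinearMap.adjoint (L * M)) ^ ℓ) (2 * m) (2 * m + 2 * ℓ - 1)
      = -conj (α (2 * m - 1)) *
          ∏ j ∈ Finset.range (2 * ℓ - 1), (rho α (2 * m + j) : ℂ) ∧
    entryZ ((ContinuousLinearMap.adjoint (L * M)) ^ ℓ) (2 * m + 1) (2 * m + 2 * ℓ)
      = (∏ j ∈ Finset.range (2 * ℓ - 1), (rho α (2 * m + 1 + j) : ℂ)) *
          α (2 * m + 2 * ℓ) := by
  have upper := upperBandEdge_cmv_pow hL hM hℓ
  have lower := lowerBandEdge_cmv_pow hL hM hℓ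
  have h2m := even_two_mul m
  have h2m1 := odd_two_mul_add_one m
  simp only [ContinuousLinearMap.adjoint_pow, entryZ_adjoint]
  refine ⟨fun k hk => ⟨upper.vanish _ _ (by omega), ?_⟩, upper.even_top _ _ h2m rfl,
    upper.odd_top _ _ h2m1 (by ring), ?_, ?_, upper.even_next _ _ h2m rfl, ?_, ?_, ?_⟩
  · rw [lower.vanish _ _ (by omega), map_zero]
  · rw [lower.even_bottom _ _ h2m rfl, map_zero]
  · rw [lower.odd_bottom _ _ h2m1 (by ring), conj_rhoProd, rhoProd]
  · rw [upper.odd_next _ _ h2m1 (by ring), add_sub_cancel_right, rhoProd]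
  · rw [lower.even_next _ _ h2m rfl, map_mul, map_neg, conj_rhoProd, rhoProd]
  · rw [lower.odd_next _ _ h2m1 (by ring), map_mul, Complex.conj_conj, conj_rhoProd, rhoProd,
      mul_comm]

/-- matrix entries of powers of the extended CMV matrix
`C = LM` and of `C^{−ℓ} = (C*)^ℓ`. -/
theorem statement9 (α : ℤ → ℂ) (hα : ∀ n, ‖α n‖ < 1)
    (L M : HZ →L[ℂ] HZ) (hL : IsCMVL α L) (hM : IsCMVM α M)
    (ℓ : ℕ) (hℓ : 1 ≤ ℓ) (m : ℤ) :
    (∀ k : ℤ, 2 * (ℓ : ℤ) < k →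
      entryZ ((L * M) ^ ℓ) m (m + k) = 0 ∧
      entryZ ((ContinuousLinearMap.adjoint (L * M)) ^ ℓ) m (m + k) = 0) ∧
    entryZ ((L * M) ^ ℓ) (2 * m) (2 * m + 2 * ℓ)
      = ∏ j ∈ Finset.range (2 * ℓ), (rho α (2 * m + j) : ℂ) ∧
    entryZ ((L * M) ^ ℓ) (2 * m + 1) (2 * m + 2 * ℓ + 1) = 0 ∧
    entryZ ((ContinuousLinearMap.adjoint (L * M)) ^ ℓ) (2 * m) (2 * m + 2 * ℓ) = 0 ∧
    entryZ ((ContinuousLinearMap.adjoint (L * M)) ^ ℓ) (2 * m + 1) (2 * m + 2 * ℓ + 1)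
      = ∏ j ∈ Finset.range (2 * ℓ), (rho α (2 * m + 1 + j) : ℂ) ∧
    entryZ ((L * M) ^ ℓ) (2 * m) (2 * m + 2 * ℓ - 1)
      = (∏ j ∈ Finset.range (2 * ℓ - 1), (rho α (2 * m + j) : ℂ)) *
          conj (α (2 * m + 2 * ℓ - 1)) ∧
    entryZ ((L * M) ^ ℓ) (2 * m + 1) (2 * m + 2 * ℓ)
      = -α (2 * m) * ∏ j ∈ Finset.range (2 * ℓ - 1), (rho α (2 * m + 1 + j) : ℂ) ∧
    entryZ ((ContinuousLinearMap.adjoint (L * M)) ^ ℓ) (2 * m) (2 * m + 2 * ℓ - 1)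
      = -conj (α (2 * m - 1)) *
          ∏ j ∈ Finset.range (2 * ℓ - 1), (rho α (2 * m + j) : ℂ) ∧
    entryZ ((ContinuousLinearMap.adjoint (L * M)) ^ ℓ) (2 * m + 1) (2 * m + 2 * ℓ)
      = (∏ j ∈ Finset.range (2 * ℓ - 1), (rho α (2 * m + 1 + j) : ℂ)) *
          α (2 * m + 2 * ℓ) :=
  statement9_general α L M hL hM ℓ hℓ m
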